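/- arXiv:2104.14431 — 5 statements merged into one kernel-verified Lean document; each statement's English description precedes it below -/
import Mathlib

section
/- Let 𝒳 be a type, W : 𝒳 → PMF(ℕ) a channel, and P a finitely supported pmf on 𝒳 with induced output pmf Q(k) = Σ_{x} P(x)·W(x)(k). Suppose η ∈ (0,1] satisfies the strong data-processing inequality: for all pmfs P₁, P₂ on 𝒳 with 0 < KL(P₁‖P₂) < ∞, the induced outputs satisfy KL(Q₁‖Q₂) ≤ η·KL(P₁‖P₂). Suppose C ∈ ℝ is such that KL(W(x) ‖ Q) = C for every x in the support of P. Then P(x) ≤ exp(−C/η) for every x in the support of P. -/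
open Real ENNReal
open scoped Classical

/-- Kullback–Leibler divergence between two pmfs (natural log), valued in `ℝ≥0∞`:
`+∞` when absolute continuity fails or the defining sum does not converge. -/
noncomputable def klPMF {α : Type*} (μ ν : PMF α) : ℝ≥0∞ :=
  if μ.support ⊆ ν.support ∧
      Summable (fun a => (μ a).toReal * Real.log ((μ a).toReal / (ν a).toReal))
  then ENNReal.ofReal (∑' a, (μ a).toReal * Real.log ((μ a).toReal / (ν a).toReal))
  else ⊤

/-!
Compare the Dirac input `δ_x` with `P`: their outputs are `W x` and `Q`, so the SDPI gives
`C ≤ η · KL(δ_x ‖ P) = η · log (1 / P x)`, i.e. `P x ≤ exp (-C/η)`. The SDPI is only assumed at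
positive divergence; the missing case `P x = 1` forces `P = δ_x`, hence `Q = W x` and `C ≤ 0`.
-/

theorem PMF.eq_pure_of_apply_eq_one {α : Type*} {P : PMF α} {x : α} (h : P x = 1) :
    P = PMF.pure x := by
  ext a
  by_cases hax : a = x
  · simp [hax, h]
  · rw [PMF.pure_apply_of_ne _ _ hax, PMF.apply_eq_zero_iff, (P.apply_eq_one_iff x).1 h]
    exact hax

lemma PMF.toReal_apply_pos {α : Type*} {P : PMF α} {x : α} (hx : x ∈ P.support) :
    0 < (P x).toReal :=
  ENNReal.toReal_pos ((P.mem_support_iff x).1 hx) (P.apply_ne_top x)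

lemma klPMF_self {α : Type*} (μ : PMF α) : klPMF μ μ = 0 := by
  simp [klPMF]

lemma klPMF_pure_left {α : Type*} {P : PMF α} {x : α} (hx : x ∈ P.support) :
    klPMF (PMF.pure x) P = ENNReal.ofReal (-log (P x).toReal) := by
  have hzero : ∀ a ≠ x,
      (PMF.pure x a).toReal * log ((PMF.pure x a).toReal / (P a).toReal) = 0 := by
    intro a ha
    simp [PMF.pure_apply_of_ne _ _ ha]
  have hsupp : (PMF.pure x).support ⊆ P.support := by simpa using hx
  rw [klPMF, if_pos ⟨hsupp, summable_of_ne_finset_zero (s := {x}) (by simpa using hzero)⟩,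
    tsum_eq_single x hzero]
  simp

lemma klPMF_pure_bind_le {α β : Type*} {W : α → PMF β} {η : ℝ}
    (hSDPI : ∀ P₁ P₂ : PMF α, 0 < klPMF P₁ P₂ → klPMF P₁ P₂ < ⊤ →
      klPMF (P₁.bind W) (P₂.bind W) ≤ ENNReal.ofReal η * klPMF P₁ P₂)
    {P : PMF α} {x : α} (hx : x ∈ P.support) :
    klPMF (W x) (P.bind W) ≤ ENNReal.ofReal η * klPMF (PMF.pure x) P := by
  by_cases hPx : P x = 1
  · simp [PMF.eq_pure_of_apply_eq_one hPx, klPMF_self]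
  have hp_lt : (P x).toReal < 1 :=
    toReal_lt_of_lt_ofReal (by simpa using (P.coe_le_one x).lt_of_ne hPx)
  have hkl := klPMF_pure_left hx
  rw [← PMF.pure_bind x W]
  refine hSDPI _ _ ?_ (hkl ▸ ENNReal.ofReal_lt_top)
  rw [hkl, ENNReal.ofReal_pos, neg_pos]
  exact log_neg (PMF.toReal_apply_pos hx) hp_lt

theorem mass_upper_bound_of_SDPI_general {𝒳 : Type*} (W : 𝒳 → PMF ℕ) (P : PMF 𝒳)
    (η : ℝ) (hη0 : 0 < η)
    (hSDPI : ∀ P₁ P₂ : PMF 𝒳, 0 < klPMF P₁ P₂ → klPMF P₁ P₂ < ⊤ →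
      klPMF (P₁.bind W) (P₂.bind W) ≤ ENNReal.ofReal η * klPMF P₁ P₂)
    (C : ℝ) (hC : ∀ x ∈ P.support, klPMF (W x) (P.bind W) = ENNReal.ofReal C) :
    ∀ x ∈ P.support, (P x).toReal ≤ Real.exp (-(C / η)) := by
  intro x hx
  have hp_pos := PMF.toReal_apply_pos hx
  have hlog_nonpos : log (P x).toReal ≤ 0 :=
    log_nonpos hp_pos.le (toReal_le_of_le_ofReal zero_le_one (by simpa using P.coe_le_one x))
  have hC_le : C ≤ η * -log (P x).toReal := by
    have h := klPMF_pure_bind_le hSDPI hx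
    rwa [hC x hx, klPMF_pure_left hx, ← ENNReal.ofReal_mul hη0.le,
      ENNReal.ofReal_le_ofReal_iff (mul_nonneg hη0.le (neg_nonneg.2 hlog_nonpos))] at h
  calc (P x).toReal = exp (log (P x).toReal) := (exp_log hp_pos).symm
    _ ≤ exp (-(C / η)) := exp_le_exp.2 (by rw [le_neg, div_le_iff₀' hη0]; exact hC_le)

/-- If `η ∈ (0,1]` satisfies the strong data-processing inequality for the channel `W`, and
`KL(W(x) ‖ Q) = C` for every `x` in the support of a finitely supported input pmf `P`
(where `Q` is the induced output pmf), then `P(x) ≤ exp (−C/η)` on the support of `P`. -/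
theorem mass_upper_bound_of_SDPI {𝒳 : Type*} (W : 𝒳 → PMF ℕ) (P : PMF 𝒳)
    (hPfin : P.support.Finite) (η : ℝ) (hη0 : 0 < η) (hη1 : η ≤ 1)
    (hSDPI : ∀ P₁ P₂ : PMF 𝒳, 0 < klPMF P₁ P₂ → klPMF P₁ P₂ < ⊤ →
      klPMF (P₁.bind W) (P₂.bind W) ≤ ENNReal.ofReal η * klPMF P₁ P₂)
    (C : ℝ) (hC : ∀ x ∈ P.support, klPMF (W x) (P.bind W) = ENNReal.ofReal C) :
    ∀ x ∈ P.support, (P x).toReal ≤ Real.exp (-(C / η)) :=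
  mass_upper_bound_of_SDPI_general W P η hη0 hSDPI C hC
end

section
/- Let A ≥ 0 and let μ, ν be probability measures on [0, A]. Define the induced output pmfs on ℕ by μ_Y(k) = ∫ x^k e^{−x}/k! dμ(x) and ν_Y(k) = ∫ x^k e^{−x}/k! dν(x). Then KL(μ_Y ‖ ν_Y) ≤ (1 − e^{−A}) · KL(μ ‖ ν), i.e., the KL contraction coefficient of the amplitude-constrained Poisson channel is at most 1 − e^{−A}. -/
open Real MeasureTheory ENNReal
open scoped Classical

noncomputable def klDiv' {α : Type*} [MeasurableSpace α] (μ ν : Measure α) : ℝ≥0∞ :=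
  if μ ≪ ν ∧ Integrable (fun a => Real.log (μ.rnDeriv ν a).toReal) μ
  then ENNReal.ofReal (∫ a, Real.log (μ.rnDeriv ν a).toReal ∂μ)
  else ⊤

noncomputable def outMeasure (μ : Measure ℝ) : Measure ℕ :=
  Measure.count.withDensity
    (fun k => ENNReal.ofReal (∫ x, x ^ k * Real.exp (-x) / (Nat.factorial k) ∂μ))

/-!
On `[0, A]` the Poisson channel `P(k|x)` gives the output `0` probability at least `e^{-A}` for
every input (Doeblin's condition), so the residual weights `R(k|x) = P(k|x) - e^{-A} [k = 0]` are
nonnegative and sum to `1 - e^{-A}` for every `x`. For each output letter `k`, integrating the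
tangent-line bound `t log t ≥ t log m + t - m` at `t = dμ/dν(x)`, `m = μ_Y(k)/ν_Y(k)` against
`R(k|x) dν(x)` gives `μ_Y(k) log (μ_Y(k)/ν_Y(k)) ≤ ∫ R(k|x) log (dμ/dν) dμ`; summing over `k`
yields the factor `1 - e^{-A}`.
-/

lemma klDiv'_of_ac_of_integrable {α : Type*} [MeasurableSpace α] {μ ν : Measure α} (hμν : μ ≪ ν)
    (hint : Integrable (llr μ ν) μ) : klDiv' μ ν = ENNReal.ofReal (∫ x, llr μ ν x ∂μ) :=
  if_pos ⟨hμν, hint⟩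

lemma klDiv'_self {α : Type*} [MeasurableSpace α] (μ : Measure α) [SigmaFinite μ] :
    klDiv' μ μ = 0 := by
  rw [klDiv'_of_ac_of_integrable .rfl ((integrable_zero _ _ μ).congr (llr_self μ).symm),
    integral_congr_ae (llr_self μ)]
  simp

lemma klDiv'_of_not_ac_and_integrable {α : Type*} [MeasurableSpace α] {μ ν : Measure α}
    (h : ¬(μ ≪ ν ∧ Integrable (llr μ ν) μ)) : klDiv' μ ν = ⊤ :=
  if_neg h

section Discrete

variable {ι : Type*} [MeasurableSpace ι] [MeasurableSingletonClass ι] [Countable ι]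
  {a b : ι → ℝ}

lemma count_withDensity_eq_withDensity_div (hb : ∀ k, 0 ≤ b k)
    (hab : ∀ k, b k = 0 → a k = 0) :
    Measure.count.withDensity (fun k => ENNReal.ofReal (a k)) =
      (Measure.count.withDensity fun k => ENNReal.ofReal (b k)).withDensity
        fun k => ENNReal.ofReal (a k) / ENNReal.ofReal (b k) := by
  rw [← withDensity_mul _ .of_discrete .of_discrete]
  congr 1 with k
  by_cases hbk : b k = 0
  · simp [hbk, hab k hbk]
  · exact (ENNReal.mul_div_cancel (by simpa using (hb k).lt_of_ne' hbk) ofReal_ne_top).symm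

lemma klDiv'_count_withDensity (ha : ∀ k, 0 ≤ a k) (hb : ∀ k, 0 ≤ b k)
    (hab : ∀ k, b k = 0 → a k = 0) (hS : Summable fun k => a k * log (a k / b k)) :
    klDiv' (Measure.count.withDensity fun k => ENNReal.ofReal (a k))
        (Measure.count.withDensity fun k => ENNReal.ofReal (b k)) =
      ENNReal.ofReal (∑' k, a k * log (a k / b k)) := by
  set P := Measure.count.withDensity fun k => ENNReal.ofReal (a k)
  set Q := Measure.count.withDensity fun k => ENNReal.ofReal (b k)
  have hPQ : P = Q.withDensity fun k => ENNReal.ofReal (a k) / ENNReal.ofReal (b k) :=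
    count_withDensity_eq_withDensity_div hb hab
  have hac : P ≪ Q := hPQ ▸ withDensity_absolutelyContinuous _ _
  have hllr : llr P Q =ᵐ[P] fun k => log (a k / b k) := by
    have hrn : P.rnDeriv Q =ᵐ[Q] _ := hPQ ▸ Q.rnDeriv_withDensity .of_discrete
    filter_upwards [hac.ae_le hrn] with k hk
    rw [llr, hk, ENNReal.toReal_div, toReal_ofReal (ha k), toReal_ofReal (hb k)]
  have hint : Integrable (fun k => log (a k / b k)) P := by
    rw [integrable_withDensity_iff_integrable_smul' .of_discrete (by simp), integrable_count_iff]
    simpa [toReal_ofReal (ha _)] using hS.abs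
  rw [klDiv'_of_ac_of_integrable hac (hint.congr hllr.symm), integral_congr_ae hllr,
    integral_countable hint]
  refine congrArg ENNReal.ofReal (tsum_congr fun k => ?_)
  simp [P, measureReal_def, withDensity_apply, toReal_ofReal (ha k)]

end Discrete

lemma mul_log_add_sub_le_mul_log {t m : ℝ} (ht : 0 ≤ t) (hm : 0 < m) :
    t * log m + t - m ≤ t * log t := by
  rcases ht.eq_or_lt with rfl | ht
  · simpa using hm.le
  have h := mul_le_mul_of_nonneg_left (log_le_sub_one_of_pos (div_pos hm ht)) ht.le
  rw [log_div hm.ne' ht.ne', mul_sub_one, mul_div_cancel₀ _ ht.ne'] at h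
  linarith

lemma sub_le_mul_log_div {a b : ℝ} (ha : 0 ≤ a) (hb : 0 < b) : a - b ≤ a * log (a / b) := by
  rcases ha.eq_or_lt with rfl | ha'
  · simpa using hb.le
  rw [log_div ha'.ne' hb.ne']
  linarith [mul_log_add_sub_le_mul_log ha hb]

lemma hasSum_integral_mul {α ι : Type*} [MeasurableSpace α] [Countable ι] {μ : Measure α}
    {r : ι → α → ℝ} {s : ℝ} {g : α → ℝ} (hr : ∀ k, Measurable (r k)) (hr0 : ∀ k x, 0 ≤ r k x)
    (hrs : ∀ x, HasSum (r · x) s) (hg : Integrable g μ) :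
    HasSum (fun k => ∫ x, r k x * g x ∂μ) (s * ∫ x, g x ∂μ) := by
  rw [← integral_const_mul]
  refine hasSum_integral_of_dominated_convergence (fun k x => r k x * |g x|)
    (fun k => (hr k).aestronglyMeasurable.mul hg.1)
    (fun k => ae_of_all _ fun x => by simp [abs_of_nonneg (hr0 k x)])
    (ae_of_all _ fun x => ((hrs x).mul_right _).summable) ?_
    (ae_of_all _ fun x => (hrs x).mul_right (g x))
  simp_rw [tsum_mul_right, (hrs _).tsum_eq]
  exact hg.abs.const_mul s

section Kernel

variable {α : Type*} [MeasurableSpace α] {μ ν : Measure α}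

lemma integral_eq_zero_of_absolutelyContinuous {w : α → ℝ} (hw0 : 0 ≤ w)
    (hwν : Integrable w ν) (hμν : μ ≪ ν) (h : ∫ x, w x ∂ν = 0) : ∫ x, w x ∂μ = 0 :=
  integral_eq_zero_of_ae (hμν.ae_le ((integral_eq_zero_iff_of_nonneg hw0 hwν).mp h))

lemma integral_mul_log_div_integral_le [IsProbabilityMeasure μ] [IsProbabilityMeasure ν]
    {w : α → ℝ} {e : ℝ} (hw : Measurable w) (he : 0 ≤ e) (hew : ∀ x, e ≤ w x)
    (hw1 : ∀ x, w x ≤ 1) (hμν : μ ≪ ν) (hint : Integrable (llr μ ν) μ) :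
    (∫ x, w x ∂μ) * log ((∫ x, w x ∂μ) / ∫ x, w x ∂ν) ≤ ∫ x, (w x - e) * llr μ ν x ∂μ := by
  set a := ∫ x, w x ∂μ
  set b := ∫ x, w x ∂ν
  have hw0 : 0 ≤ w := fun x => he.trans (hew x)
  have hr0 : ∀ x, 0 ≤ w x - e := fun x => sub_nonneg.2 (hew x)
  have hwint : ∀ (ρ : Measure α) [IsFiniteMeasure ρ], Integrable w ρ := fun ρ _ =>
    (integrable_const 1).mono' hw.aestronglyMeasurable
      (ae_of_all _ fun x => by simpa [abs_of_nonneg (hw0 x)] using hw1 x)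
  have hrint : ∀ (ρ : Measure α) [IsProbabilityMeasure ρ], Integrable (fun x => w x - e) ρ ∧
      ∫ x, (w x - e) ∂ρ = ∫ x, w x ∂ρ - e := fun ρ _ =>
    ⟨(hwint ρ).sub (integrable_const e), by simp [integral_sub (hwint ρ) (integrable_const e)]⟩
  by_cases ha : a = 0
  · have hr : (fun x => (w x - e) * llr μ ν x) =ᵐ[μ] 0 := by
      filter_upwards [(integral_eq_zero_iff_of_nonneg hw0 (hwint μ)).mp ha] with x (hx : w x = 0)
      simp [hx, le_antisymm (hx ▸ hew x) he]
    simp [ha, integral_congr_ae hr]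
  have ha' : 0 < a := (integral_nonneg hw0).lt_of_ne' ha
  have hb' : 0 < b := (integral_nonneg hw0).lt_of_ne' fun hb =>
    ha (integral_eq_zero_of_absolutelyContinuous hw0 (hwint ν) hμν hb)
  set m := a / b
  have hm : 0 < m := div_pos ha' hb'
  have hmb : m * b = a := div_mul_cancel₀ a hb'.ne'
  set f : α → ℝ := fun x => (μ.rnDeriv ν x).toReal
  have hfr : Integrable (fun x => f x • ((log m + 1) * (w x - e))) ν :=
    (integrable_rnDeriv_smul_iff hμν).mpr ((hrint μ).1.const_mul _)
  have hrllr : Integrable (fun x => (w x - e) * llr μ ν x) μ :=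
    hint.bdd_mul (c := 1) (hw.sub_const e).aestronglyMeasurable (ae_of_all _ fun x => by
      rw [Real.norm_of_nonneg (hr0 x)]; linarith [hw1 x])
  calc a * log m ≤ (log m + 1) * (a - e) - m * (b - e) := by
        -- the gap is `e * (m - 1 - log m) ≥ 0`, as `a = m * b`
        nlinarith [mul_nonneg he (by linarith [log_le_sub_one_of_pos hm] : 0 ≤ m - 1 - log m)]
    _ = ∫ x, (f x • ((log m + 1) * (w x - e)) - m * (w x - e)) ∂ν := by
        rw [integral_sub hfr ((hrint ν).1.const_mul m), integral_rnDeriv_smul hμν,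
          integral_const_mul, integral_const_mul, (hrint μ).2, (hrint ν).2]
    _ ≤ ∫ x, f x • ((w x - e) * llr μ ν x) ∂ν := by
        refine integral_mono (hfr.sub ((hrint ν).1.const_mul m))
          ((integrable_rnDeriv_smul_iff hμν).mpr hrllr) fun x => ?_
        have := mul_le_mul_of_nonneg_left
          (mul_log_add_sub_le_mul_log (t := f x) ENNReal.toReal_nonneg hm) (hr0 x)
        simp only [smul_eq_mul, llr]
        linarith
    _ = ∫ x, (w x - e) * llr μ ν x ∂μ := integral_rnDeriv_smul hμν

noncomputable def channelOutput {ι : Type*} [MeasurableSpace ι] (W : ι → α → ℝ)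
    (μ : Measure α) : Measure ι :=
  Measure.count.withDensity fun k => ENNReal.ofReal (∫ x, W k x ∂μ)

structure IsMinorizedKernel {ι : Type*} (W : ι → α → ℝ) (e : ι → ℝ) : Prop where
  measurable : ∀ k, Measurable (W k)
  hasSum_one : ∀ x, HasSum (W · x) 1
  nonneg : ∀ k, 0 ≤ e k
  le : ∀ k x, e k ≤ W k x

namespace IsMinorizedKernel

variable {ι : Type*} {W : ι → α → ℝ} {e : ι → ℝ} {c : ℝ}

lemma kernel_nonneg (hW : IsMinorizedKernel W e) (k : ι) (x : α) : 0 ≤ W k x :=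
  (hW.nonneg k).trans (hW.le k x)

lemma le_one (hW : IsMinorizedKernel W e) (k : ι) (x : α) : W k x ≤ 1 :=
  le_hasSum (hW.hasSum_one x) k fun j _ => hW.kernel_nonneg j x

lemma hasSum_sub (hW : IsMinorizedKernel W e) (hc : HasSum e c) (x : α) :
    HasSum (fun k => W k x - e k) (1 - c) :=
  (hW.hasSum_one x).sub hc

lemma hasSum_integral [Countable ι] (hW : IsMinorizedKernel W e) (μ : Measure α)
    [IsProbabilityMeasure μ] :
    HasSum (fun k => ∫ x, W k x ∂μ) 1 := by
  simpa using hasSum_integral_mul (g := fun _ => (1 : ℝ)) (μ := μ) hW.measurable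
    hW.kernel_nonneg hW.hasSum_one (integrable_const 1)

lemma integrable (hW : IsMinorizedKernel W e) (μ : Measure α) [IsFiniteMeasure μ] (k : ι) :
    Integrable (W k) μ :=
  (integrable_const 1).mono' (hW.measurable k).aestronglyMeasurable
    (ae_of_all _ fun x => by simpa [abs_of_nonneg (hW.kernel_nonneg k x)] using hW.le_one k x)

lemma klDiv'_channelOutput_le_of_ac [MeasurableSpace ι] [MeasurableSingletonClass ι]
    [Countable ι] (hW : IsMinorizedKernel W e) (hc : HasSum e c)
    [IsProbabilityMeasure μ] [IsProbabilityMeasure ν] (hμν : μ ≪ ν)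
    (hint : Integrable (llr μ ν) μ) :
    klDiv' (channelOutput W μ) (channelOutput W ν) ≤
      ENNReal.ofReal ((1 - c) * ∫ x, llr μ ν x ∂μ) := by
  set a := fun k => ∫ x, W k x ∂μ
  set b := fun k => ∫ x, W k x ∂ν
  have ha : ∀ k, 0 ≤ a k := fun k => integral_nonneg (hW.kernel_nonneg k)
  have hb : ∀ k, 0 ≤ b k := fun k => integral_nonneg (hW.kernel_nonneg k)
  have hab : ∀ k, b k = 0 → a k = 0 := fun k =>
    integral_eq_zero_of_absolutelyContinuous (hW.kernel_nonneg k) (hW.integrable ν k) hμν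
  have hG : HasSum (fun k => ∫ x, (W k x - e k) * llr μ ν x ∂μ)
      ((1 - c) * ∫ x, llr μ ν x ∂μ) :=
    hasSum_integral_mul (fun k => (hW.measurable k).sub_const _)
      (fun k x => sub_nonneg.2 (hW.le k x)) (hW.hasSum_sub hc) hint
  have hS_le : ∀ k, a k * log (a k / b k) ≤ ∫ x, (W k x - e k) * llr μ ν x ∂μ := fun k =>
    integral_mul_log_div_integral_le (hW.measurable k) (hW.nonneg k) (hW.le k) (hW.le_one k)
      hμν hint
  have hS_ge : ∀ k, a k - b k ≤ a k * log (a k / b k) := by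
    intro k
    rcases (hb k).eq_or_lt with hbk | hbk
    · simp [← hbk, hab k hbk.symm]
    · exact sub_le_mul_log_div (ha k) hbk
  have hd : Summable (fun k => a k - b k) :=
    ((hW.hasSum_integral μ).sub (hW.hasSum_integral ν)).summable
  have hS : Summable fun k => a k * log (a k / b k) := by
    simpa using (Summable.of_nonneg_of_le (fun k => sub_nonneg.2 (hS_ge k))
      (fun k => sub_le_sub_right (hS_le k) _) (hG.summable.sub hd)).add hd
  rw [channelOutput, channelOutput, klDiv'_count_withDensity ha hb hab hS]
  exact ENNReal.ofReal_le_ofReal (hasSum_le hS_le hS.hasSum hG)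

lemma eq_of_hasSum_one (hW : IsMinorizedKernel W e) (he : HasSum e 1) (k : ι) (x : α) :
    W k x = e k := by
  have h := (hasSum_zero_iff_of_nonneg fun j => sub_nonneg.2 (hW.le j x)).mp
    (by simpa using hW.hasSum_sub he x)
  exact sub_eq_zero.1 (congrFun h k)

lemma channelOutput_eq_of_hasSum_one [MeasurableSpace ι] (hW : IsMinorizedKernel W e)
    (he : HasSum e 1) (μ ν : Measure α) [IsProbabilityMeasure μ] [IsProbabilityMeasure ν] :
    channelOutput W μ = channelOutput W ν := by
  simp [channelOutput, hW.eq_of_hasSum_one he]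

theorem klDiv'_channelOutput_le [MeasurableSpace ι] [MeasurableSingletonClass ι] [Countable ι]
    (hW : IsMinorizedKernel W e) (hc : HasSum e c) (μ ν : Measure α)
    [IsProbabilityMeasure μ] [IsProbabilityMeasure ν] :
    klDiv' (channelOutput W μ) (channelOutput W ν) ≤ ENNReal.ofReal (1 - c) * klDiv' μ ν := by
  obtain ⟨x⟩ := nonempty_of_isProbabilityMeasure μ
  have hc1 : c ≤ 1 :=
    sub_nonneg.1 ((hW.hasSum_sub hc x).nonneg fun k => sub_nonneg.2 (hW.le k x))
  by_cases hKL : μ ≪ ν ∧ Integrable (llr μ ν) μ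
  · rw [klDiv'_of_ac_of_integrable hKL.1 hKL.2, ← ENNReal.ofReal_mul (sub_nonneg.2 hc1)]
    exact hW.klDiv'_channelOutput_le_of_ac hc hKL.1 hKL.2
  rw [klDiv'_of_not_ac_and_integrable hKL]
  rcases hc1.lt_or_eq with hc1 | rfl
  · simp [ENNReal.mul_top, hc1]
  · rw [hW.channelOutput_eq_of_hasSum_one hc μ ν, channelOutput, klDiv'_self]
    exact zero_le

end IsMinorizedKernel

end Kernel

-- Clamping the input to `[0, A]` makes the minorization hold for every real `x` without changing
-- the output of measures supported on `[0, A]`.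
open ProbabilityTheory in
noncomputable def clampedPoisson (A : ℝ) (k : ℕ) (x : ℝ) : ℝ :=
  (poissonMeasure (min x A).toNNReal).real {k}

open ProbabilityTheory in
lemma isMinorizedKernel_clampedPoisson {A : ℝ} (hA : 0 ≤ A) :
    IsMinorizedKernel (clampedPoisson A) (Pi.single 0 (exp (-A))) where
  measurable k := by
    unfold clampedPoisson
    simp only [poissonMeasure_real_singleton]
    fun_prop
  hasSum_one x := by
    simpa only [clampedPoisson, poissonMeasure_real_singleton] using hasSum_one_poissonMeasure _
  nonneg k := by
    rcases k with _ | k <;> simp [(exp_pos _).le]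
  le k x := by
    rcases k with _ | k
    · simpa [clampedPoisson, poissonMeasure_real_singleton] using hA
    · rw [Pi.single_eq_of_ne k.succ_ne_zero]
      exact measureReal_nonneg

open ProbabilityTheory in
lemma outMeasure_eq_channelOutput {A : ℝ} {μ : Measure ℝ} (hμ : μ (Set.Icc 0 A)ᶜ = 0) :
    outMeasure μ = channelOutput (clampedPoisson A) μ := by
  unfold outMeasure channelOutput
  congr 1 with k
  congr 1
  refine integral_congr_ae ?_
  filter_upwards [mem_ae_iff.mpr hμ] with x hx
  simp [clampedPoisson, poissonMeasure_real_singleton, min_eq_left hx.2,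
    Real.toNNReal_of_nonneg hx.1]
  ring

/-- The KL contraction coefficient of the amplitude-constrained Poisson channel is at most
`1 - e^{-A}`: for probability measures `μ, ν` supported on `[0, A]`,
`KL(μ_Y ‖ ν_Y) ≤ (1 - e^{-A}) · KL(μ ‖ ν)`. -/
theorem poisson_contraction_coefficient
    (A : ℝ) (hA : 0 ≤ A) (μ ν : Measure ℝ)
    [IsProbabilityMeasure μ] [IsProbabilityMeasure ν]
    (hμ : μ (Set.Icc 0 A)ᶜ = 0) (hν : ν (Set.Icc 0 A)ᶜ = 0) :
    klDiv' (outMeasure μ) (outMeasure ν) ≤ ENNReal.ofReal (1 - Real.exp (-A)) * klDiv' μ ν := by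
  rw [outMeasure_eq_channelOutput hμ, outMeasure_eq_channelOutput hν]
  exact (isMinorizedKernel_clampedPoisson hA).klDiv'_channelOutput_le (hasSum_pi_single 0 _) μ ν
end

section
/- Suppose S = {0, A} with A > 0, weights p(0), p(A) > 0, p(0) + p(A) = 1, and C ∈ ℝ satisfies D(A) = C and D(0) = C (equivalently C = −log(p(0) + p(A)e^{−A})). Then equality holds in the location-dependent bound: p(A) = exp( −C − A·e^{−A}/(1 − e^{−A}) ). -/
open Real

/-- Poisson channel pmf: `P_{Y|X}(y|x) = x^y e^{-x} / y!` (with `0^0 = 1`, `0! = 1`). -/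
noncomputable def poissonPMF (x : ℝ) (y : ℕ) : ℝ := x ^ y * Real.exp (-x) / (Nat.factorial y)

/-- Output pmf induced by a finitely supported input: `P_Y(k) = Σ_{x ∈ S} p(x) x^k e^{-x}/k!`. -/
noncomputable def outPMF (S : Finset ℝ) (p : ℝ → ℝ) (k : ℕ) : ℝ :=
  ∑ x ∈ S, p x * poissonPMF x k

/-- Relative entropy `D(x) = Σ_k P_{Y|X}(k|x) log (P_{Y|X}(k|x) / P_Y(k))`. -/
noncomputable def relEnt (S : Finset ℝ) (p : ℝ → ℝ) (x : ℝ) : ℝ :=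
  ∑' k : ℕ, poissonPMF x k * Real.log (poissonPMF x k / outPMF S p k)
/-! At input `0` the channel output is `0` almost surely, so `D(0) = -log P_Y(0)`. Outputs
`k ≥ 1` arise only from input `A`, where the likelihood ratio is `1 / p(A)`; hence
`D(A) = e^{-A} log (e^{-A} / P_Y(0)) - (1 - e^{-A}) log p(A)`. Equating both values with `C`
and solving the resulting linear equation for `log p(A)` gives the claim. -/

lemma poissonPMF_zero_right (x : ℝ) : poissonPMF x 0 = exp (-x) := by
  simp [poissonPMF]

lemma poissonPMF_zero_succ (k : ℕ) : poissonPMF 0 (k + 1) = 0 := by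
  simp [poissonPMF]

lemma poissonPMF_ne_zero {x : ℝ} (hx : x ≠ 0) (k : ℕ) : poissonPMF x k ≠ 0 := by
  unfold poissonPMF
  positivity

lemma hasSum_poissonPMF (x : ℝ) : HasSum (poissonPMF x) 1 := by
  have h := (NormedSpace.expSeries_div_hasSum_exp x).mul_right (exp (-x))
  rw [← Real.exp_eq_exp_ℝ, ← exp_add, add_neg_cancel, exp_zero] at h
  exact h.congr_fun fun k => by simp only [poissonPMF]; ring

lemma hasSum_poissonPMF_succ (x : ℝ) :
    HasSum (fun k => poissonPMF x (k + 1)) (1 - exp (-x)) := by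
  simpa [poissonPMF_zero_right] using (hasSum_nat_add_iff' 1).mpr (hasSum_poissonPMF x)

lemma relEnt_zero (S : Finset ℝ) (p : ℝ → ℝ) : relEnt S p 0 = -log (outPMF S p 0) := by
  rw [relEnt, tsum_eq_single 0]
  · simp [poissonPMF]
  · intro k hk
    simp [poissonPMF, hk]

section BinarySupport

variable {a : ℝ} (p : ℝ → ℝ)

lemma outPMF_pair_zero (ha : a ≠ 0) : outPMF {0, a} p 0 = p 0 + p a * exp (-a) := by
  simp [outPMF, Finset.sum_pair ha.symm, poissonPMF]

lemma outPMF_pair_succ (ha : a ≠ 0) (k : ℕ) :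
    outPMF {0, a} p (k + 1) = p a * poissonPMF a (k + 1) := by
  rw [outPMF, Finset.sum_pair ha.symm, poissonPMF_zero_succ, mul_zero, zero_add]

/-- Every output `k ≥ 1` is produced only by the input `a`, so its log-likelihood ratio is
`log (1 / p a)`. -/
lemma relEnt_pair_right (ha : a ≠ 0) :
    relEnt {0, a} p a
      = exp (-a) * log (exp (-a) / outPMF {0, a} p 0) - (1 - exp (-a)) * log (p a) := by
  let term (k : ℕ) := poissonPMF a k * log (poissonPMF a k / outPMF {0, a} p k)
  have hsucc : HasSum (fun k => term (k + 1)) ((1 - exp (-a)) * -log (p a)) := by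
    refine ((hasSum_poissonPMF_succ a).mul_right _).congr_fun fun k => ?_
    simp only [term]
    rw [outPMF_pair_succ p ha, div_mul_cancel_right₀ (poissonPMF_ne_zero ha _), log_inv]
  change ∑' k, term k = _
  rw [hsucc.zero_add.tsum_eq]
  simp only [term, poissonPMF_zero_right]
  ring

end BinarySupport

theorem mass_binary_equality_general
    (A : ℝ) (hA : 0 < A) (p : ℝ → ℝ)
    (hp0 : 0 < p 0) (hpA : 0 < p A)
    (C : ℝ) (hCA : relEnt {0, A} p A = C) (hC0 : relEnt {0, A} p 0 = C) :
    p A = Real.exp (-C - A * Real.exp (-A) / (1 - Real.exp (-A))) := by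
  have hQ : 0 < outPMF {0, A} p 0 := by rw [outPMF_pair_zero p hA.ne']; positivity
  set Q := outPMF {0, A} p 0
  have hC : C = -log Q := by rw [← hC0, relEnt_zero]
  have hDA : C = exp (-A) * (-A - log Q) - (1 - exp (-A)) * log (p A) := by
    rw [← hCA, relEnt_pair_right p hA.ne', log_div (exp_pos _).ne' hQ.ne', log_exp]
  have hgap : 1 - exp (-A) ≠ 0 := (sub_pos.mpr (exp_lt_one_iff.mpr (neg_lt_zero.mpr hA))).ne'
  have hlog : log (p A) = -C - A * exp (-A) / (1 - exp (-A)) := by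
    field_simp
    linear_combination hDA - exp (-A) * hC
  rw [← hlog, exp_log hpA]

/-- For a binary support `S = {0, A}` with `A > 0`, positive weights summing to one and
`D(A) = C = D(0)`, equality holds in the location-dependent bound:
`p(A) = exp (−C − A e^{-A}/(1 − e^{-A}))`. -/
theorem mass_binary_equality
    (A : ℝ) (hA : 0 < A) (p : ℝ → ℝ)
    (hp0 : 0 < p 0) (hpA : 0 < p A) (hpsum : p 0 + p A = 1)
    (C : ℝ) (hCA : relEnt {0, A} p A = C) (hC0 : relEnt {0, A} p 0 = C) :
    p A = Real.exp (-C - A * Real.exp (-A) / (1 - Real.exp (-A))) :=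
  mass_binary_equality_general A hA p hp0 hpA C hCA hC0
end

section
/- Let A ≥ e (Euler's number) and let x > 0 be a real number satisfying log(x/A) + 1/x ≤ 0. Then exp(−√(2(log A − 1))) ≤ x ≤ A − 1. (In particular, any interior support point of the capacity-achieving input, which satisfies this inequality, lies in this range.) -/
/-!
Write the condition as `log x + 1/x ≤ log A`. Since `log (1 + 1/x) ≤ 1/x`, its left side dominates
`log (x + 1)`, which gives `x ≤ A - 1`. With `t = -log x` it reads `exp t ≤ log A + t`, and the
quadratic lower bound `1 + t + t²/2 ≤ exp t` forces `t ≤ √(2 (log A - 1))`.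
-/

open Real

lemma log_add_one_le_log_add_inv {x : ℝ} (hx : 0 < x) : log (x + 1) ≤ log x + x⁻¹ := by
  have hfactor : x + 1 = x * (1 + x⁻¹) := by field_simp
  rw [hfactor, log_mul hx.ne' (by positivity)]
  linarith [log_le_sub_one_of_pos (show 0 < 1 + x⁻¹ by positivity)]

lemma le_sqrt_of_exp_le_add {t c : ℝ} (h : exp t ≤ c + t) : t ≤ √(2 * (c - 1)) := by
  rcases le_or_gt t 0 with ht | ht
  · exact ht.trans (sqrt_nonneg _)
  · apply le_sqrt_of_sq_le
    linarith [quadratic_le_exp_of_nonneg ht.le]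

/-- If `A ≥ e` and `x > 0` satisfies `log (x/A) + 1/x ≤ 0`, then
`exp (−√(2 (log A − 1))) ≤ x ≤ A − 1`. -/
theorem interior_support_point_location
    (A x : ℝ) (hA : Real.exp 1 ≤ A) (hx : 0 < x)
    (h : Real.log (x / A) + 1 / x ≤ 0) :
    Real.exp (-Real.sqrt (2 * (Real.log A - 1))) ≤ x ∧ x ≤ A - 1 := by
  have hA0 : 0 < A := (exp_pos 1).trans_le hA
  have hcond : log x + x⁻¹ ≤ log A := by
    rw [log_div hx.ne' hA0.ne', one_div] at h
    linarith
  constructor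
  · have hexp : exp (-log x) ≤ log A + -log x := by
      rw [exp_neg, exp_log hx]
      linarith
    have hlog : -√(2 * (log A - 1)) ≤ log x := by
      linarith [le_sqrt_of_exp_le_add hexp]
    simpa only [exp_log hx] using exp_le_exp.mpr hlog
  · have hlog : log (x + 1) ≤ log A := (log_add_one_le_log_add_inv hx).trans hcond
    linarith [(log_le_log_iff (by linarith) hA0).mp hlog]
end

section
/- Suppose A ∈ S and C ∈ ℝ. Define m(k) = (k+1)·P_Y(k+1)/P_Y(k) for k ∈ ℕ (the posterior mean of the input given output k), and define ψ(k) = k·log(1/m(k−1)) + log(k!·P_Y(k)) + C + k for k ≥ 1, with ψ(0) = log(P_Y(0)) + C (convention: the first term vanishes at k = 0). Then ψ(k) ≥ −A + log p(A) + C + k for every k ∈ ℕ; in particular ψ(k) ≥ 0 for every natural number k ≥ A − log p(A) − C. -/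
open Real

/-- Posterior mean of the input given output `k`: `m(k) = (k+1) P_Y(k+1) / P_Y(k)`. -/
noncomputable def postMean (S : Finset ℝ) (p : ℝ → ℝ) (k : ℕ) : ℝ :=
  ((k : ℝ) + 1) * outPMF S p (k + 1) / outPMF S p k

/-- `ψ(k) = k log (1/m(k−1)) + log (k! P_Y(k)) + C + k`, with the first term vanishing at
`k = 0` (so `ψ(0) = log P_Y(0) + C`). -/
noncomputable def psiFun (S : Finset ℝ) (p : ℝ → ℝ) (C : ℝ) (k : ℕ) : ℝ :=
  (k : ℝ) * Real.log (1 / postMean S p (k - 1)) +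
    Real.log ((Nat.factorial k : ℝ) * outPMF S p k) + C + k

/-!
Two elementary bounds combine. The posterior mean is an average of inputs in `[0, A]`, so
`log (1 / m(k-1)) ≥ -log A`. Keeping only the summand `x = A` of `k! P_Y(k)` gives
`log (k! P_Y(k)) ≥ log p(A) + k log A - A`. Adding, the `k log A` terms cancel.
-/

lemma poissonPMF_nonneg {x : ℝ} (hx : 0 ≤ x) (k : ℕ) : 0 ≤ poissonPMF x k := by
  unfold poissonPMF; positivity

lemma poissonPMF_pos {x : ℝ} (hx : 0 < x) (k : ℕ) : 0 < poissonPMF x k := by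
  unfold poissonPMF; positivity

lemma factorial_mul_poissonPMF (x : ℝ) (k : ℕ) :
    (k.factorial : ℝ) * poissonPMF x k = x ^ k * Real.exp (-x) := by
  unfold poissonPMF; field_simp

lemma succ_mul_poissonPMF_succ (x : ℝ) (k : ℕ) :
    ((k : ℝ) + 1) * poissonPMF x (k + 1) = x * poissonPMF x k := by
  simp only [poissonPMF, pow_succ, Nat.factorial_succ, Nat.cast_mul, Nat.cast_add, Nat.cast_one]
  field_simp

section OutPMF

variable {S : Finset ℝ} {p : ℝ → ℝ}

lemma outPMF_pos (hS : ∀ x ∈ S, 0 ≤ x) (hp : ∀ x ∈ S, 0 ≤ p x) {a : ℝ} (ha : a ∈ S)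
    (ha0 : 0 < a) (hpa : 0 < p a) (k : ℕ) : 0 < outPMF S p k :=
  Finset.sum_pos' (fun x hx => mul_nonneg (hp x hx) (poissonPMF_nonneg (hS x hx) k))
    ⟨a, ha, mul_pos hpa (poissonPMF_pos ha0 k)⟩

lemma succ_mul_outPMF_succ (k : ℕ) :
    ((k : ℝ) + 1) * outPMF S p (k + 1) = ∑ x ∈ S, x * (p x * poissonPMF x k) := by
  rw [outPMF, Finset.mul_sum]
  refine Finset.sum_congr rfl fun x _ => ?_
  rw [mul_left_comm, succ_mul_poissonPMF_succ]
  ring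

lemma factorial_mul_outPMF (k : ℕ) :
    (k.factorial : ℝ) * outPMF S p k = ∑ x ∈ S, p x * (x ^ k * Real.exp (-x)) := by
  rw [outPMF, Finset.mul_sum]
  refine Finset.sum_congr rfl fun x _ => ?_
  rw [mul_left_comm, factorial_mul_poissonPMF]

lemma mul_pow_mul_exp_le_factorial_mul_outPMF (hS : ∀ x ∈ S, 0 ≤ x) (hp : ∀ x ∈ S, 0 ≤ p x)
    {a : ℝ} (ha : a ∈ S) (k : ℕ) :
    p a * (a ^ k * Real.exp (-a)) ≤ (k.factorial : ℝ) * outPMF S p k := by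
  rw [factorial_mul_outPMF]
  refine Finset.single_le_sum (f := fun x => p x * (x ^ k * Real.exp (-x))) (fun x hx => ?_) ha
  have := hS x hx
  have := hp x hx
  positivity

lemma postMean_pos {k : ℕ} (hk : 0 < outPMF S p k) (hk1 : 0 < outPMF S p (k + 1)) :
    0 < postMean S p k :=
  div_pos (mul_pos (by positivity) hk1) hk

lemma postMean_le {A : ℝ} {k : ℕ} (hS : (S : Set ℝ) ⊆ Set.Icc 0 A) (hp : ∀ x ∈ S, 0 ≤ p x)
    (hk : 0 < outPMF S p k) : postMean S p k ≤ A := by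
  rw [postMean, div_le_iff₀ hk, succ_mul_outPMF_succ, outPMF, Finset.mul_sum]
  exact Finset.sum_le_sum fun x hx =>
    mul_le_mul_of_nonneg_right (hS hx).2
      (mul_nonneg (hp x hx) (poissonPMF_nonneg (hS hx).1 k))

end OutPMF

lemma psiFun_ge {A : ℝ} (hA : 0 < A) {S : Finset ℝ} (hS : (S : Set ℝ) ⊆ Set.Icc 0 A)
    {p : ℝ → ℝ} (hp : ∀ x ∈ S, 0 < p x) (hAS : A ∈ S) (C : ℝ) (k : ℕ) :
    -A + Real.log (p A) + C + k ≤ psiFun S p C k := by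
  have hS0 : ∀ x ∈ S, 0 ≤ x := fun x hx => (hS hx).1
  have hp0 : ∀ x ∈ S, 0 ≤ p x := fun x hx => (hp x hx).le
  have hpA := hp A hAS
  have hPY := outPMF_pos hS0 hp0 hAS hA hpA
  have hlog_mean : -Real.log A ≤ Real.log (1 / postMean S p (k - 1)) := by
    rw [one_div, Real.log_inv, neg_le_neg_iff]
    exact Real.log_le_log (postMean_pos (hPY _) (hPY _)) (postMean_le hS hp0 (hPY _))
  have hlog_out : Real.log (p A) + k * Real.log A - A ≤
      Real.log ((k.factorial : ℝ) * outPMF S p k) := by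
    calc Real.log (p A) + k * Real.log A - A = Real.log (p A * (A ^ k * Real.exp (-A))) := by
          rw [Real.log_mul hpA.ne' (by positivity), Real.log_mul (by positivity)
            (Real.exp_ne_zero _), Real.log_pow, Real.log_exp]
          ring
      _ ≤ _ := Real.log_le_log (by positivity)
          (mul_pow_mul_exp_le_factorial_mul_outPMF hS0 hp0 hAS k)
  have := mul_le_mul_of_nonneg_left hlog_mean (Nat.cast_nonneg (α := ℝ) k)
  rw [psiFun]
  linarith

theorem psi_lower_bound_general
    (A : ℝ) (hA : 0 < A) (S : Finset ℝ) (hS : (S : Set ℝ) ⊆ Set.Icc 0 A)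
    (p : ℝ → ℝ) (hp : ∀ x ∈ S, 0 < p x)
    (hAS : A ∈ S) (C : ℝ) :
    (∀ k : ℕ, -A + Real.log (p A) + C + k ≤ psiFun S p C k) ∧
    (∀ k : ℕ, A - Real.log (p A) - C ≤ (k : ℝ) → 0 ≤ psiFun S p C k) :=
  ⟨psiFun_ge hA hS hp hAS C, fun k hk => by linarith [psiFun_ge hA hS hp hAS C k]⟩

/-- If `A ∈ S`, then `ψ(k) ≥ −A + log p(A) + C + k` for all `k`; in particular `ψ(k) ≥ 0`
for every `k ≥ A − log p(A) − C`. -/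
theorem psi_lower_bound
    (A : ℝ) (hA : 0 < A) (S : Finset ℝ) (hS : (S : Set ℝ) ⊆ Set.Icc 0 A)
    (p : ℝ → ℝ) (hp : ∀ x ∈ S, 0 < p x) (hpsum : ∑ x ∈ S, p x = 1)
    (hAS : A ∈ S) (C : ℝ) :
    (∀ k : ℕ, -A + Real.log (p A) + C + k ≤ psiFun S p C k) ∧
    (∀ k : ℕ, A - Real.log (p A) - C ≤ (k : ℝ) → 0 ≤ psiFun S p C k) :=
  psi_lower_bound_general A hA S hS p hp hAS C
end
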